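/- arXiv:1001.2562 — 3 statements merged into one kernel-verified Lean document; each statement's English description precedes it below -/
import Mathlib

section
/- Let A, A', B, B' be free abelian groups, all of the same finite rank. Let F : A → B and F' : A' → B' be group homomorphisms, and let ⟨·,·⟩_A : A × A' → ℤ and ⟨·,·⟩_B : B × B' → ℤ be perfect pairings such that ⟨F(x), F'(y)⟩_B = ⟨x, y⟩_A for all x ∈ A and y ∈ A'. Then F and F' are both isomorphisms. -/
/-!
Composing the dual of `F'` with the pairing on `B` gives a map `B → Hom(A', ℤ) ≅ A`, and
compatibility of the pairings says it is a left inverse of `F`. A surjection between free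
modules of the same finite rank over a commutative ring is bijective, so this left inverse,
and hence `F`, is an isomorphism. Exchanging the roles of the two factors treats `F'`.
-/

open Module Function

namespace LinearMap

variable {R M N M' N' : Type*} [CommRing R]
  [AddCommGroup M] [AddCommGroup N] [AddCommGroup M'] [AddCommGroup N']
  [Module R M] [Module R N] [Module R M'] [Module R N']
  [Free R M] [Free R N] [Module.Finite R M] [Module.Finite R N]

theorem bijective_of_leftInverse_of_finrank_le {f : M →ₗ[R] N} {g : N →ₗ[R] M}
    (hgf : LeftInverse g f) (h : finrank R N ≤ finrank R M) : Bijective f := by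
  have hg : Bijective g := OrzechProperty.bijective_of_surjective_of_finrank_le g hgf.surjective h
  exact bijective_iff_has_inverse.2 ⟨g, hgf, hgf.rightInverse_of_injective hg.1⟩

theorem bijective_of_compatible_pairings (f : M →ₗ[R] N) (f' : M' →ₗ[R] N')
    {pM : M →ₗ[R] M' →ₗ[R] R} (hpM : Bijective pM) (pN : N →ₗ[R] N' →ₗ[R] R)
    (hcompat : ∀ x y, pN (f x) (f' y) = pM x y) (h : finrank R N ≤ finrank R M) :
    Bijective f := by
  let e := LinearEquiv.ofBijective pM hpM
  refine bijective_of_leftInverse_of_finrank_le (g := e.symm.toLinearMap ∘ₗ f'.dualMap ∘ₗ pN)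
    (fun x => e.symm_apply_eq.2 ?_) h
  ext y
  simp [e, hcompat]

end LinearMap

theorem perfect_pairing_compatible_maps_bijective_general
    {A A' B B' : Type*}
    [AddCommGroup A] [AddCommGroup A'] [AddCommGroup B] [AddCommGroup B']
    [Module ℤ A] [Module ℤ A'] [Module ℤ B] [Module ℤ B']
    [Module.Free ℤ A] [Module.Free ℤ A'] [Module.Free ℤ B] [Module.Free ℤ B']
    [Module.Finite ℤ A] [Module.Finite ℤ A'] [Module.Finite ℤ B] [Module.Finite ℤ B']
    (n : ℕ)
    (hA : Module.finrank ℤ A = n) (hA' : Module.finrank ℤ A' = n)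
    (hB : Module.finrank ℤ B = n) (hB' : Module.finrank ℤ B' = n)
    (F : A →ₗ[ℤ] B) (F' : A' →ₗ[ℤ] B')
    (pA : A →ₗ[ℤ] A' →ₗ[ℤ] ℤ) (pB : B →ₗ[ℤ] B' →ₗ[ℤ] ℤ)
    (hpA₁ : Function.Bijective pA) (hpA₂ : Function.Bijective pA.flip)
    (hcompat : ∀ (x : A) (y : A'), pB (F x) (F' y) = pA x y) :
    Function.Bijective F ∧ Function.Bijective F' :=
  ⟨F.bijective_of_compatible_pairings F' hpA₁ pB hcompat (hB.trans hA.symm).le,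
    F'.bijective_of_compatible_pairings F hpA₂ pB.flip (fun y x => hcompat x y)
      (hB'.trans hA'.symm).le⟩

/-- Let `A, A', B, B'` be free abelian groups, all of the same finite
rank `n`. Let `F : A → B` and `F' : A' → B'` be group homomorphisms (equivalently,
`ℤ`-linear maps), and let `pA : A × A' → ℤ` and `pB : B × B' → ℤ` be perfect pairings
(i.e. both induced maps to the `ℤ`-dual are bijective) such that
`pB (F x) (F' y) = pA x y` for all `x, y`.  Then `F` and `F'` are both isomorphisms. -/
theorem perfect_pairing_compatible_maps_bijective
    {A A' B B' : Type*}
    [AddCommGroup A] [AddCommGroup A'] [AddCommGroup B] [AddCommGroup B']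
    [Module ℤ A] [Module ℤ A'] [Module ℤ B] [Module ℤ B']
    [Module.Free ℤ A] [Module.Free ℤ A'] [Module.Free ℤ B] [Module.Free ℤ B']
    [Module.Finite ℤ A] [Module.Finite ℤ A'] [Module.Finite ℤ B] [Module.Finite ℤ B']
    (n : ℕ)
    (hA : Module.finrank ℤ A = n) (hA' : Module.finrank ℤ A' = n)
    (hB : Module.finrank ℤ B = n) (hB' : Module.finrank ℤ B' = n)
    (F : A →ₗ[ℤ] B) (F' : A' →ₗ[ℤ] B')
    (pA : A →ₗ[ℤ] A' →ₗ[ℤ] ℤ) (pB : B →ₗ[ℤ] B' →ₗ[ℤ] ℤ)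
    (hpA₁ : Function.Bijective pA) (hpA₂ : Function.Bijective pA.flip)
    (hpB₁ : Function.Bijective pB) (hpB₂ : Function.Bijective pB.flip)
    (hcompat : ∀ (x : A) (y : A'), pB (F x) (F' y) = pA x y) :
    Function.Bijective F ∧ Function.Bijective F' :=
  perfect_pairing_compatible_maps_bijective_general n hA hA' hB hB' F F' pA pB hpA₁ hpA₂ hcompat
end

section
/- Assume B is an asymptotically orthonormal ℤ[v,v⁻¹]-basis of K and that β(b) = b for every b ∈ B. Then an element ξ ∈ K satisfies β(ξ) = ξ and (ξ‖ξ) ∈ 1 + v⁻¹ℤ[[v⁻¹]] if and only if ξ = b or ξ = −b for some b ∈ B; moreover, this b is uniquely determined by ξ. -/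
open LaurentPolynomial

/-- The ring `ℤ((v⁻¹))` of formal Laurent series in `v⁻¹`, realized as Hahn series
`HahnSeries ℤ ℤ` where the exponent `k` records the coefficient of `v⁻ᵏ` (so the
coefficient of `vⁿ` sits in degree `-n`, and supports are bounded above in powers
of `v`). -/
abbrev LaurentSeriesVinv : Type := HahnSeries ℤ ℤ

/-- The image of the variable `v` in `ℤ((v⁻¹))`. -/
noncomputable def vSer : LaurentSeriesVinv := HahnSeries.single (-1 : ℤ) (1 : ℤ)

/-- `f` lies in `v⁻¹ℤ[[v⁻¹]]`: the coefficient of `vⁿ` vanishes for all `n ≥ 0`. -/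
def MemVinvIntPowerSeries (f : LaurentSeriesVinv) : Prop :=
  ∀ k : ℤ, k ≤ 0 → f.coeff k = 0

/-- `f` lies in `1 + v⁻¹ℤ[[v⁻¹]]`. -/
def MemOnePlusVinv (f : LaurentSeriesVinv) : Prop :=
  f.coeff 0 = 1 ∧ ∀ k : ℤ, k < 0 → f.coeff k = 0

/-!
Write `ξ = ∑ cᵢ bᵢ` with `cᵢ ∈ ℤ[v,v⁻¹]`. Since `β` fixes the `bᵢ` and is semilinear for
`v ↦ v⁻¹`, `β ξ = ξ` makes every `cᵢ` bar-invariant. If some `cᵢ` involved a positive power of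
`v`, let `vᴺ` be the highest one; by asymptotic orthonormality the coefficient of `v²ᴺ` in
`(ξ‖ξ)` is the sum of the squares of the `vᴺ`-coefficients of the `cᵢ`, which is positive,
contradicting `(ξ‖ξ) ∈ 1 + v⁻¹ℤ[[v⁻¹]]`. Hence, by bar-invariance, the `cᵢ` are integers, and
the constant term of `(ξ‖ξ)` is `∑ cᵢ² = 1`.
-/

namespace HahnSeries

variable {Γ R : Type*} [AddCommMonoid Γ] [LinearOrder Γ] [IsOrderedCancelAddMonoid Γ]
  [NonUnitalNonAssocSemiring R] {x y : HahnSeries Γ R} {a b : Γ}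

theorem coeff_mul_eq_zero_of_lt_add (hx : ∀ m < a, x.coeff m = 0) (hy : ∀ m < b, y.coeff m = 0)
    {k : Γ} (hk : k < a + b) : (x * y).coeff k = 0 := by
  rw [coeff_mul]
  refine Finset.sum_eq_zero fun ij hij => ?_
  obtain ⟨-, -, hsum⟩ := Finset.mem_antidiagonal.1 hij
  rcases lt_or_ge ij.1 a with h | h
  · rw [hx _ h, zero_mul]
  · have hj : ij.2 < b := lt_of_not_ge fun hj => (add_le_add h hj).not_gt (hsum ▸ hk)
    rw [hy _ hj, mul_zero]

theorem coeff_mul_add_of_coeff_lt_eq_zero (hx : ∀ m < a, x.coeff m = 0)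
    (hy : ∀ m < b, y.coeff m = 0) : (x * y).coeff (a + b) = x.coeff a * y.coeff b := by
  rw [coeff_mul]
  refine Finset.sum_eq_single (a, b) (fun ij hij hne => ?_) fun hab => ?_
  · obtain ⟨-, -, hsum⟩ := Finset.mem_antidiagonal.1 hij
    rcases lt_or_ge ij.1 a with ha | ha
    · rw [hx _ ha, zero_mul]
    rcases lt_or_ge ij.2 b with hb | hb
    · rw [hy _ hb, mul_zero]
    obtain ⟨rfl, rfl⟩ := (add_eq_add_iff_eq_and_eq ha hb).1 hsum.symm
    exact absurd rfl hne
  · by_contra hne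
    exact hab (Finset.mem_antidiagonal.2 ⟨left_ne_zero_of_mul hne, right_ne_zero_of_mul hne, rfl⟩)

end HahnSeries

theorem LaurentPolynomial.map_smul_of_map_T_one_smul {K S N : Type*} [AddCommGroup K]
    [Module ℤ[T;T⁻¹] K] [Ring S] [AddCommGroup N] [Module S N]
    (σ : ℤ[T;T⁻¹] →+* S) (f : K →+ N) (hf : ∀ x, f ((T 1 : ℤ[T;T⁻¹]) • x) = σ (T 1) • f x)
    (q : ℤ[T;T⁻¹]) (x : K) : f (q • x) = σ q • f x := by
  have hT_neg_one : ∀ x, f ((T (-1) : ℤ[T;T⁻¹]) • x) = σ (T (-1)) • f x := fun x => by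
    have h := hf ((T (-1) : ℤ[T;T⁻¹]) • x)
    rw [smul_smul, ← T_add, add_neg_cancel, T_zero, one_smul] at h
    rw [h, smul_smul, ← map_mul, ← T_add, neg_add_cancel, T_zero, map_one, one_smul]
  have hT : ∀ n : ℤ, ∀ x, f ((T n : ℤ[T;T⁻¹]) • x) = σ (T n) • f x := fun n => by
    induction n using Int.induction_on with
    | zero => simp [T_zero]
    | succ n ih => intro x; rw [add_comm, T_add, map_mul, mul_smul, mul_smul, hf, ih]
    | pred n ih =>
      intro x; rw [sub_eq_neg_add, T_add, map_mul, mul_smul, mul_smul, hT_neg_one, ih]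
  induction q using LaurentPolynomial.induction_on' with
  | add q r hq hr => rw [add_smul, map_add, hq, hr, map_add, add_smul]
  | C_mul_T n a =>
    rw [mul_smul, eq_intCast C a, Int.cast_smul_eq_zsmul, map_zsmul, hT, map_mul, map_intCast,
      mul_smul, Int.cast_smul_eq_zsmul]

theorem LaurentPolynomial.eq_C_coeff_zero_of_invert_eq_self {R : Type*} [CommSemiring R]
    {q : R[T;T⁻¹]} (hinv : invert q = q) (hpos : ∀ n > 0, q.coeff n = 0) : q = C (q.coeff 0) := by
  refine LaurentPolynomial.ext fun n => ?_
  rw [← single_eq_C, AddMonoidAlgebra.coeff_single, Finsupp.single_apply]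
  rcases lt_trichotomy n 0 with hn | rfl | hn
  · rw [if_neg hn.ne', ← hinv, invert_apply, hpos _ (neg_pos.2 hn)]
  · rw [if_pos rfl]
  · rw [if_neg hn.ne, hpos n hn]

theorem Module.Basis.repr_map_of_map_smul {ι R M : Type*} [Semiring R] [AddCommMonoid M]
    [Module R M] (b : Module.Basis ι R M) (σ : R →+* R) (f : M →+ M)
    (hf : ∀ (r : R) x, f (r • x) = σ r • f x) (hb : ∀ i, f (b i) = b i) (x : M) :
    b.repr (f x) = (b.repr x).mapRange σ (map_zero σ) := by
  have hfx : f x = Finsupp.linearCombination R b ((b.repr x).mapRange σ (map_zero σ)) := by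
    conv_lhs => rw [← b.linearCombination_repr x]
    simp [Finsupp.linearCombination_apply, map_finsuppSum, Finsupp.sum_mapRange_index, hf, hb]
  rw [hfx, b.repr_linearCombination]

theorem Module.Basis.eq_of_eq_or_eq_neg {ι R M : Type*} [Ring R] [Nontrivial R] [AddCommGroup M]
    [Module R M] (b : Module.Basis ι R M) {x : M} {i j : ι}
    (hi : x = b i ∨ x = -b i) (hj : x = b j ∨ x = -b j) : i = j := by
  classical
  have hxj : b.repr x j ≠ 0 := by rcases hj with rfl | rfl <;> simp
  by_contra hij
  rcases hi with rfl | rfl <;> simp [hij] at hxj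

theorem Finsupp.exists_eq_single_of_sum_sq_eq_one {ι : Type*} {g : ι →₀ ℤ}
    (h : g.sum (fun _ a => a ^ 2) = 1) : ∃ i, g = single i 1 ∨ g = single i (-1) := by
  have hne : g.support.Nonempty := by
    rw [Finsupp.support_nonempty_iff]
    rintro rfl
    simp at h
  have hcard : (g.support.card : ℤ) ≤ 1 :=
    calc (g.support.card : ℤ) = ∑ i ∈ g.support, 1 := by simp
      _ ≤ ∑ i ∈ g.support, g i ^ 2 := Finset.sum_le_sum fun i hi =>
          (one_le_sq_iff_one_le_abs _).2 (Int.one_le_abs (Finsupp.mem_support_iff.1 hi))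
      _ = 1 := h
  obtain ⟨i, hi⟩ := Finset.card_eq_one.1 (le_antisymm (by exact_mod_cast hcard) hne.card_pos)
  have hgi : g i * g i = 1 := by simpa [Finsupp.sum, hi, sq] using h
  refine ⟨i, ?_⟩
  rw [(Finsupp.support_eq_singleton.1 hi).2]
  rcases mul_self_eq_one_iff.1 hgi with h1 | h1 <;> simp [h1]

noncomputable def toVinvSeries : ℤ[T;T⁻¹] →ₐ[ℤ] LaurentSeriesVinv :=
  AddMonoidAlgebra.lift ℤ LaurentSeriesVinv ℤ
    { toFun := fun n => HahnSeries.single (-n.toAdd) 1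
      map_one' := by simp
      map_mul' := fun m n => by simp [HahnSeries.single_mul_single, add_comm] }

theorem toVinvSeries_single (n a : ℤ) :
    toVinvSeries (.single n a) = HahnSeries.single (-n) a := by
  rw [toVinvSeries, AddMonoidAlgebra.lift_single, Algebra.smul_def]
  simp [← HahnSeries.single_zero_intCast, HahnSeries.single_mul_single]

theorem toVinvSeries_T_one : toVinvSeries (T 1) = vSer := by
  rw [T, toVinvSeries_single, vSer]

theorem coeff_toVinvSeries (q : ℤ[T;T⁻¹]) (k : ℤ) :
    (toVinvSeries q).coeff k = q.coeff (-k) := by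
  induction q using LaurentPolynomial.induction_on' with
  | add q r hq hr => simp [hq, hr]
  | C_mul_T n a =>
    rw [← single_eq_C_mul_T, toVinvSeries_single, HahnSeries.coeff_single,
      AddMonoidAlgebra.coeff_single, Finsupp.single_apply]
    by_cases h : k = -n
    · rw [if_pos h, if_pos (by omega)]
    · rw [if_neg h, if_neg (by omega)]

section Pairing

variable {ι K : Type*} [AddCommGroup K] [Module ℤ[T;T⁻¹] K]
  (p : K →ₗ[ℤ] K →ₗ[ℤ] LaurentSeriesVinv)

theorem pairing_smul_left (hp : ∀ x y : K, p ((T 1 : ℤ[T;T⁻¹]) • x) y = vSer * p x y)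
    (q : ℤ[T;T⁻¹]) (x y : K) : p (q • x) y = toVinvSeries q * p x y :=
  LaurentPolynomial.map_smul_of_map_T_one_smul toVinvSeries.toRingHom (p.flip y).toAddMonoidHom
    (fun x => by simp [hp, toVinvSeries_T_one]) q x

theorem pairing_smul_right (hp : ∀ x y : K, p x ((T 1 : ℤ[T;T⁻¹]) • y) = vSer * p x y)
    (q : ℤ[T;T⁻¹]) (x y : K) : p x (q • y) = toVinvSeries q * p x y :=
  LaurentPolynomial.map_smul_of_map_T_one_smul toVinvSeries.toRingHom (p x).toAddMonoidHom
    (fun y => by simp [hp, toVinvSeries_T_one]) q y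

theorem pairing_self_eq_sum (b : Module.Basis ι ℤ[T;T⁻¹] K)
    (hp₁ : ∀ x y : K, p ((T 1 : ℤ[T;T⁻¹]) • x) y = vSer * p x y)
    (hp₂ : ∀ x y : K, p x ((T 1 : ℤ[T;T⁻¹]) • y) = vSer * p x y) (x : K) :
    p x x = ∑ i ∈ (b.repr x).support, ∑ j ∈ (b.repr x).support,
      toVinvSeries (b.repr x i) * toVinvSeries (b.repr x j) * p (b i) (b j) := by
  conv_lhs => rw [← b.linearCombination_repr x, Finsupp.linearCombination_apply, Finsupp.sum]
  simp only [map_sum, LinearMap.sum_apply, pairing_smul_left p hp₁, pairing_smul_right p hp₂,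
    mul_assoc]
  exact Finset.sum_comm

end Pairing

section GramSum

variable {ι : Type*} (s : Finset ι) (f : ι → LaurentSeriesVinv) {P : ι → ι → LaurentSeriesVinv}

theorem coeff_gram_sum_add_self (horth : ∀ i j, i ≠ j → MemVinvIntPowerSeries (P i j))
    (hnorm : ∀ i, MemOnePlusVinv (P i i)) {N : ℤ} (hN : ∀ i ∈ s, ∀ m < N, (f i).coeff m = 0) :
    (∑ i ∈ s, ∑ j ∈ s, f i * f j * P i j).coeff (N + N) = ∑ i ∈ s, (f i).coeff N ^ 2 := by
  simp only [HahnSeries.coeff_sum]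
  refine Finset.sum_congr rfl fun i hi => ?_
  have hii : ∀ m < N + N, (f i * f i).coeff m = 0 := fun m =>
    HahnSeries.coeff_mul_eq_zero_of_lt_add (hN i hi) (hN i hi)
  rw [Finset.sum_eq_single_of_mem i hi fun j hj hji => ?_]
  · rw [← add_zero (N + N), HahnSeries.coeff_mul_add_of_coeff_lt_eq_zero hii (hnorm i).2,
      (hnorm i).1, mul_one, HahnSeries.coeff_mul_add_of_coeff_lt_eq_zero (hN i hi) (hN i hi), sq]
  · have hij : ∀ m < N + N, (f i * f j).coeff m = 0 := fun m =>
      HahnSeries.coeff_mul_eq_zero_of_lt_add (hN i hi) (hN j hj)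
    exact HahnSeries.coeff_mul_eq_zero_of_lt_add hij
      (fun m hm => horth i j (Ne.symm hji) m (Int.lt_add_one_iff.1 hm)) (lt_add_one _)

theorem coeff_neg_eq_zero_of_gram_sum (horth : ∀ i j, i ≠ j → MemVinvIntPowerSeries (P i j))
    (hnorm : ∀ i, MemOnePlusVinv (P i i))
    (hQ : ∀ k < 0, (∑ i ∈ s, ∑ j ∈ s, f i * f j * P i j).coeff k = 0) :
    ∀ i ∈ s, ∀ m < 0, (f i).coeff m = 0 := by
  classical
  by_contra! h
  obtain ⟨i, hi, m, hm, hfm⟩ := h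
  have hfi : f i ≠ 0 := fun h => hfm (by simp [h])
  obtain ⟨i₀, hi₀, hmin⟩ := (s.filter (f · ≠ 0)).exists_min_image (fun i => (f i).order)
    ⟨i, Finset.mem_filter.2 ⟨hi, hfi⟩⟩
  obtain ⟨hi₀s, hfi₀⟩ := Finset.mem_filter.1 hi₀
  set M := (f i₀).order
  have hlow : ∀ j ∈ s, ∀ k < M, (f j).coeff k = 0 := fun j hj k hk => by
    by_cases hfj : f j = 0
    · simp [hfj]
    exact HahnSeries.coeff_eq_zero_of_lt_order
      (hk.trans_le (hmin j (Finset.mem_filter.2 ⟨hj, hfj⟩)))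
  have hM : M < 0 := calc
    M ≤ (f i).order := hmin i (Finset.mem_filter.2 ⟨hi, hfi⟩)
    _ ≤ m := HahnSeries.order_le_of_coeff_ne_zero hfm
    _ < 0 := hm
  have hsq : ∑ j ∈ s, (f j).coeff M ^ 2 = 0 := by
    rw [← coeff_gram_sum_add_self s f horth hnorm hlow]
    exact hQ _ (by omega)
  have hzero := (Finset.sum_eq_zero_iff_of_nonneg fun j _ => sq_nonneg _).1 hsq i₀ hi₀s
  exact mt HahnSeries.coeff_order_eq_zero.1 hfi₀ (pow_eq_zero_iff two_ne_zero |>.1 hzero)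

end GramSum

theorem eq_single_of_invert_eq_self_of_gram_sum {ι : Type*} (c : ι →₀ ℤ[T;T⁻¹])
    {P : ι → ι → LaurentSeriesVinv} (horth : ∀ i j, i ≠ j → MemVinvIntPowerSeries (P i j))
    (hnorm : ∀ i, MemOnePlusVinv (P i i)) (hbar : ∀ i, invert (c i) = c i)
    (hQ : MemOnePlusVinv
      (∑ i ∈ c.support, ∑ j ∈ c.support, toVinvSeries (c i) * toVinvSeries (c j) * P i j)) :
    ∃ i, c = Finsupp.single i 1 ∨ c = Finsupp.single i (-1) := by
  have hlow :=
    coeff_neg_eq_zero_of_gram_sum c.support (fun i => toVinvSeries (c i)) horth hnorm hQ.2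
  set g : ι →₀ ℤ := c.mapRange (fun q => q.coeff 0)
    (by rw [AddMonoidAlgebra.coeff_zero, Finsupp.zero_apply]) with hg
  have hconst : ∀ i, c i = C ((c i).coeff 0) := fun i => by
    by_cases hi : i ∈ c.support
    · refine LaurentPolynomial.eq_C_coeff_zero_of_invert_eq_self (hbar i) fun n hn => ?_
      rw [← neg_neg n, ← coeff_toVinvSeries]
      exact hlow i hi _ (neg_neg_of_pos hn)
    · rw [Finsupp.notMem_support_iff.1 hi]
      simp
  have hc : c = g.mapRange C (map_zero C) := by
    ext1 i
    rw [Finsupp.mapRange_apply, hg, Finsupp.mapRange_apply]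
    exact hconst i
  have hsq : g.sum (fun _ a => a ^ 2) = 1 := by
    have h0 := coeff_gram_sum_add_self c.support (fun i => toVinvSeries (c i)) horth hnorm hlow
    rw [add_zero, hQ.1] at h0
    rw [Finsupp.sum_of_support_subset g Finsupp.support_mapRange (fun _ a => a ^ 2)
      (fun _ _ => zero_pow two_ne_zero), h0]
    refine Finset.sum_congr rfl fun i _ => ?_
    rw [hg, Finsupp.mapRange_apply, coeff_toVinvSeries, neg_zero]
  obtain ⟨i, hi | hi⟩ := Finsupp.exists_eq_single_of_sum_sq_eq_one hsq
  · exact ⟨i, .inl (by rw [hc, hi, Finsupp.mapRange_single, map_one])⟩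
  · exact ⟨i, .inr (by rw [hc, hi, Finsupp.mapRange_single, map_neg, map_one])⟩

theorem signed_basis_characterization_general
    {ι K : Type*} [AddCommGroup K] [Module (LaurentPolynomial ℤ) K]
    (b : Module.Basis ι (LaurentPolynomial ℤ) K)
    (p : K →ₗ[ℤ] K →ₗ[ℤ] LaurentSeriesVinv)
    (hp₁ : ∀ x y : K, p ((T 1 : LaurentPolynomial ℤ) • x) y = vSer * p x y)
    (hp₂ : ∀ x y : K, p x ((T 1 : LaurentPolynomial ℤ) • y) = vSer * p x y)
    (β : K →+ K)
    (hβv : ∀ x : K, β ((T 1 : LaurentPolynomial ℤ) • x) = (T (-1) : LaurentPolynomial ℤ) • β x)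
    (horth : ∀ i j : ι, i ≠ j → MemVinvIntPowerSeries (p (b i) (b j)))
    (hnorm : ∀ i : ι, MemOnePlusVinv (p (b i) (b i)))
    (hfix : ∀ i : ι, β (b i) = b i)
    (ξ : K) :
    (β ξ = ξ ∧ MemOnePlusVinv (p ξ ξ)) ↔ ∃! i : ι, ξ = b i ∨ ξ = -(b i) := by
  constructor
  · rintro ⟨hβξ, hξξ⟩
    have hβ_smul := LaurentPolynomial.map_smul_of_map_T_one_smul invert.toRingHom β
      (by simpa using hβv)
    have hbar : ∀ i, invert (b.repr ξ i) = b.repr ξ i := fun i => by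
      simpa [hβξ] using (DFunLike.congr_fun (b.repr_map_of_map_smul _ β hβ_smul hfix ξ) i).symm
    rw [pairing_self_eq_sum p b hp₁ hp₂] at hξξ
    obtain ⟨i, hi⟩ := eq_single_of_invert_eq_self_of_gram_sum (b.repr ξ) horth hnorm hbar hξξ
    have hξi : ξ = b i ∨ ξ = -b i := by
      rcases hi with h | h
      · exact .inl (b.repr.injective (by simp [h]))
      · exact .inr (b.repr.injective (by simp [h]))
    exact ⟨i, hξi, fun j hj => b.eq_of_eq_or_eq_neg hj hξi⟩
  · rintro ⟨i, rfl | rfl, -⟩ <;> simp [hfix, hnorm]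

/-- Let `K` be a free module over `ℤ[v,v⁻¹]` with basis
`B = {b i}` (indexed by `ι`), equipped with a `ℤ[v,v⁻¹]`-bilinear pairing
`p : K × K → ℤ((v⁻¹))` (bilinearity is expressed by `ℤ`-bilinearity together with
compatibility with multiplication by `v` in each argument) and an additive
involution `β` with `β (v • x) = v⁻¹ • β x`.  Assume the basis `B` is
asymptotically orthonormal (`(b i ‖ b j) ∈ v⁻¹ℤ[[v⁻¹]]` for `i ≠ j` and
`(b i ‖ b i) ∈ 1 + v⁻¹ℤ[[v⁻¹]]`) and that `β` fixes every `b i`.  Then an element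
`ξ ∈ K` satisfies `β ξ = ξ` and `(ξ ‖ ξ) ∈ 1 + v⁻¹ℤ[[v⁻¹]]` if and only if
`ξ = b i` or `ξ = -(b i)` for a unique index `i`. -/
theorem signed_basis_characterization
    {ι K : Type*} [AddCommGroup K] [Module (LaurentPolynomial ℤ) K]
    (b : Module.Basis ι (LaurentPolynomial ℤ) K)
    (p : K →ₗ[ℤ] K →ₗ[ℤ] LaurentSeriesVinv)
    (hp₁ : ∀ x y : K, p ((T 1 : LaurentPolynomial ℤ) • x) y = vSer * p x y)
    (hp₂ : ∀ x y : K, p x ((T 1 : LaurentPolynomial ℤ) • y) = vSer * p x y)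
    (β : K →+ K)
    (hβ₂ : ∀ x : K, β (β x) = x)
    (hβv : ∀ x : K, β ((T 1 : LaurentPolynomial ℤ) • x) = (T (-1) : LaurentPolynomial ℤ) • β x)
    (horth : ∀ i j : ι, i ≠ j → MemVinvIntPowerSeries (p (b i) (b j)))
    (hnorm : ∀ i : ι, MemOnePlusVinv (p (b i) (b i)))
    (hfix : ∀ i : ι, β (b i) = b i)
    (ξ : K) :
    (β ξ = ξ ∧ MemOnePlusVinv (p ξ ξ)) ↔ ∃! i : ι, ξ = b i ∨ ξ = -(b i) :=
  signed_basis_characterization_general b p hp₁ hp₂ β hβv horth hnorm hfix ξ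
end

section
/- Let Λ be a finitely generated free abelian group, let ℤ[Λ] be its integral group ring, and let ε : ℤ[Λ] → ℤ be the augmentation homomorphism (the ring homomorphism sending every group element of Λ to 1). Let M be a finitely generated free ℤ[Λ]-module and let σ : M → M be a ℤ[Λ]-linear map with σ ∘ σ = id_M, such that the induced ℤ-linear endomorphism of the base change M ⊗_{ℤ[Λ]} ℤ (taken along ε) is the identity. Then σ = id_M. -/
/-!
`τ := σ - 1` satisfies `τ² = -2τ` and maps `M` into `I • M` for `I = ker ε`, so
`(-2)ⁿ • τ m = τⁿ⁺¹ m ∈ Iⁿ⁺¹ • M`. Since `-2 ∉ I` and `I` is prime, in the localization at `I`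
the coordinates of `τ m` lie in every power of the maximal ideal, hence vanish by Krull's
intersection theorem (`ℤ[Λ]` is a Noetherian domain).
-/

section AdicFiltration

variable {R : Type*} [CommRing R]

open IsLocalRing in
theorem Ideal.eq_zero_of_pow_mul_mem_pow [IsDomain R] [IsNoetherianRing R] (P : Ideal R)
    [P.IsPrime] {a c : R} (ha : a ∉ P) (h : ∀ n : ℕ, a ^ n * c ∈ P ^ n) : c = 0 := by
  let Rₚ := Localization.AtPrime P
  have hc : algebraMap R Rₚ c ∈ ⨅ n : ℕ, maximalIdeal Rₚ ^ n := by
    refine Ideal.mem_iInf.mpr fun n ↦ ?_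
    have hunit : IsUnit (algebraMap R Rₚ (a ^ n)) :=
      (IsLocalization.AtPrime.isUnit_to_map_iff Rₚ P _).mpr
        fun han ↦ ha (‹P.IsPrime›.mem_of_pow_mem n han)
    rw [← Ideal.unit_mul_mem_iff_mem _ hunit, ← map_mul,
      ← IsLocalization.AtPrime.map_eq_maximalIdeal P, ← Ideal.map_pow]
    exact Ideal.mem_map_of_mem _ (h n)
  rw [Ideal.iInf_pow_eq_bot_of_isLocalRing _ (maximalIdeal.isMaximal Rₚ).ne_top,
    Ideal.mem_bot] at hc
  exact IsLocalization.injective Rₚ P.primeCompl_le_nonZeroDivisors (hc.trans (map_zero _).symm)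

variable {M : Type*} [AddCommGroup M] [Module R M]

theorem Module.Basis.repr_mem_of_mem_smul_top {ι : Type*} (b : Basis ι R M) (I : Ideal R)
    {x : M} (hx : x ∈ I • (⊤ : Submodule R M)) (i : ι) : b.repr x i ∈ I := by
  simpa using Submodule.smul_top_le_comap_smul_top I (b.coord i) hx

theorem Module.Free.eq_zero_of_pow_smul_mem_pow_smul_top [IsDomain R] [IsNoetherianRing R]
    [Module.Free R M] (P : Ideal R) [P.IsPrime] {a : R} (ha : a ∉ P) {x : M}
    (h : ∀ n : ℕ, a ^ n • x ∈ P ^ n • (⊤ : Submodule R M)) : x = 0 := by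
  let b := Module.Free.chooseBasis R M
  refine b.repr.map_eq_zero_iff.mp (Finsupp.ext fun i ↦ ?_)
  refine P.eq_zero_of_pow_mul_mem_pow ha fun n ↦ ?_
  simpa using b.repr_mem_of_mem_smul_top _ (h n) i

theorem Module.End.pow_apply_mem_pow_smul_top (I : Ideal R) {τ : Module.End R M}
    (h : ∀ m, τ m ∈ I • (⊤ : Submodule R M)) (n : ℕ) (m : M) :
    (τ ^ n) m ∈ I ^ n • (⊤ : Submodule R M) := by
  induction n generalizing m with
  | zero => simp
  | succ n ih =>
    have hrange : (⊤ : Submodule R M).map τ ≤ I • ⊤ := by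
      rintro _ ⟨y, -, rfl⟩
      exact h y
    rw [pow_succ' τ, Module.End.mul_apply, pow_succ I, Submodule.mul_smul]
    refine smul_mono_right _ hrange ?_
    rw [← Submodule.map_smul'']
    exact Submodule.mem_map_of_mem (ih m)

theorem Module.End.pow_succ_of_mul_self_eq_smul {τ : Module.End R M} {c : R}
    (h : τ * τ = c • τ) (n : ℕ) : τ ^ (n + 1) = c ^ n • τ := by
  induction n with
  | zero => simp
  | succ n ih => rw [pow_succ, ih, smul_mul_assoc, h, smul_smul, pow_succ]

theorem Module.End.sub_one_mul_self_of_mul_self_eq_one {σ : Module.End R M} (h : σ * σ = 1) :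
    (σ - 1) * (σ - 1) = (-2 : R) • (σ - 1) := by
  simp only [sub_mul, mul_sub, h, mul_one, one_mul, neg_smul, two_smul]
  abel

end AdicFiltration

section GroupRing

variable {k Λ : Type*} [CommRing k] [AddCommGroup Λ]

theorem Module.Free.uniqueSums_int [Module.Free ℤ Λ] : UniqueSums Λ :=
  let b := Module.Free.chooseBasis ℤ Λ
  .of_injective_addHom b.repr.toAddMonoidHom.toAddHom b.repr.injective inferInstance

theorem AddMonoidAlgebra.isDomain_of_free_int [IsDomain k] [Module.Free ℤ Λ] :
    IsDomain (AddMonoidAlgebra k Λ) :=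
  have : UniqueSums Λ := Module.Free.uniqueSums_int
  inferInstance

theorem AddMonoidAlgebra.isNoetherianRing_of_finite_int [IsNoetherianRing k]
    [Module.Finite ℤ Λ] : IsNoetherianRing (AddMonoidAlgebra k Λ) :=
  have : AddMonoid.FG Λ :=
    AddGroup.fg_iff_addMonoid_fg.mp (Module.Finite.iff_addGroup_fg.mp ‹_›)
  Algebra.FiniteType.isNoetherianRing k _

end GroupRing

theorem involution_trivial_on_augmentation_is_identity_general
    {Λ : Type*} [AddCommGroup Λ] [Module.Free ℤ Λ] [Module.Finite ℤ Λ]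
    (ε : AddMonoidAlgebra ℤ Λ →+* ℤ)
    {M : Type*} [AddCommGroup M] [Module (AddMonoidAlgebra ℤ Λ) M]
    [Module.Free (AddMonoidAlgebra ℤ Λ) M]
    (σ : M →ₗ[AddMonoidAlgebra ℤ Λ] M)
    (hσ₂ : σ ∘ₗ σ = LinearMap.id)
    (hσε : ∀ m : M, σ m - m ∈ (RingHom.ker ε) • (⊤ : Submodule (AddMonoidAlgebra ℤ Λ) M)) :
    σ = LinearMap.id := by
  have : IsDomain (AddMonoidAlgebra ℤ Λ) := AddMonoidAlgebra.isDomain_of_free_int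
  have : IsNoetherianRing (AddMonoidAlgebra ℤ Λ) :=
    AddMonoidAlgebra.isNoetherianRing_of_finite_int
  have : (RingHom.ker ε).IsPrime := RingHom.ker_isPrime ε
  have hτ : (σ - 1) * (σ - 1) = (-2 : AddMonoidAlgebra ℤ Λ) • (σ - 1) :=
    Module.End.sub_one_mul_self_of_mul_self_eq_one hσ₂
  have h2 : (-2 : AddMonoidAlgebra ℤ Λ) ∉ RingHom.ker ε := by
    rw [RingHom.mem_ker, map_neg, map_ofNat]
    decide
  ext m
  refine sub_eq_zero.mp (Module.Free.eq_zero_of_pow_smul_mem_pow_smul_top _ h2 fun n ↦ ?_)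
  have hpow := Module.End.pow_apply_mem_pow_smul_top (τ := σ - 1) _ hσε (n + 1) m
  rw [Module.End.pow_succ_of_mul_self_eq_smul hτ] at hpow
  exact Submodule.pow_smul_top_le _ _ n.le_succ hpow

/-- Let `Λ` be a finitely generated free abelian group and
`ℤ[Λ] = AddMonoidAlgebra ℤ Λ` its integral group ring, with augmentation
`ε : ℤ[Λ] → ℤ` (the ring homomorphism sending every group element `single g 1` to `1`).
Let `M` be a finitely generated free `ℤ[Λ]`-module and `σ : M → M` a `ℤ[Λ]`-linear
involution which induces the identity on the base change `M ⊗_{ℤ[Λ]} ℤ` along `ε`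
(equivalently, `σ m - m` lies in `(ker ε) • M` for every `m`).  Then `σ = id`. -/
theorem involution_trivial_on_augmentation_is_identity
    {Λ : Type*} [AddCommGroup Λ] [Module.Free ℤ Λ] [Module.Finite ℤ Λ]
    (ε : AddMonoidAlgebra ℤ Λ →+* ℤ)
    (hε : ∀ g : Λ, ε (AddMonoidAlgebra.single g (1 : ℤ)) = 1)
    {M : Type*} [AddCommGroup M] [Module (AddMonoidAlgebra ℤ Λ) M]
    [Module.Free (AddMonoidAlgebra ℤ Λ) M] [Module.Finite (AddMonoidAlgebra ℤ Λ) M]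
    (σ : M →ₗ[AddMonoidAlgebra ℤ Λ] M)
    (hσ₂ : σ ∘ₗ σ = LinearMap.id)
    (hσε : ∀ m : M, σ m - m ∈ (RingHom.ker ε) • (⊤ : Submodule (AddMonoidAlgebra ℤ Λ) M)) :
    σ = LinearMap.id :=
  involution_trivial_on_augmentation_is_identity_general ε σ hσ₂ hσε
end
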